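/- Fix an integer t ≥ 1 and define the polynomial sequences P_0(r), P_1(r) ∈ ℝ[p] as in the context. Then for every r ≥ 1, for each i ∈ {0,1}, and for every real number p with 0 ≤ p ≤ 2^{−t}/420, the tail of P_i(r) beyond the linear term is bounded: |∑_{j≥2} ([p^j]P_i(r))·p^{j−2}| ≤ 30·2^{2t}. -/

import Mathlib

/-! ## Decision trees -/

/-- Binary decision trees over a variable index type `ι`.  An internal vertex
`node i t0 t1` queries variable `i`; the `0`-edge leads to `t0`, the `1`-edge to `t1`. -/
inductive DTree (ι : Type) : Type where
  | leaf : Bool → DTree ι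
  | node : ι → DTree ι → DTree ι → DTree ι

namespace DTree

variable {ι : Type}

/-- Evaluate a decision tree on an input. -/
def eval : DTree ι → (ι → Bool) → Bool
  | leaf b, _ => b
  | node i t0 t1, x => if x i then t1.eval x else t0.eval x

/-- Depth: the number of edges on the longest root-to-leaf path. -/
def depth : DTree ι → ℕ
  | leaf _ => 0
  | node _ t0 t1 => max t0.depth t1.depth + 1

/-- Distance from the root to the closest leaf. -/
def minLeafDepth : DTree ι → ℕ
  | leaf _ => 0
  | node _ t0 t1 => min t0.minLeafDepth t1.minLeafDepth + 1

/-- A tree is `t`-clipped if every vertex is within distance `t` of some leaf. -/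
def Clipped (t : ℕ) : DTree ι → Prop
  | leaf _ => True
  | node _ t0 t1 =>
      min t0.minLeafDepth t1.minLeafDepth + 1 ≤ t ∧ Clipped t t0 ∧ Clipped t t1

/-- No variable in `seen` (nor any variable already queried above) is queried again:
this captures "no variable appears more than once on any root-to-leaf path". -/
def ReadOnceFrom : List ι → DTree ι → Prop
  | _, leaf _ => True
  | seen, node i t0 t1 =>
      i ∉ seen ∧ ReadOnceFrom (i :: seen) t0 ∧ ReadOnceFrom (i :: seen) t1

/-- No variable appears more than once on any root-to-leaf path. -/
def ReadOnce (T : DTree ι) : Prop := T.ReadOnceFrom []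

/-- `T` computes the boolean function `f`. -/
def Computes (T : DTree ι) (f : (ι → Bool) → Bool) : Prop := ∀ x, T.eval x = f x

/-- The list of all variables labelling internal vertices of the tree. -/
def nodeVars : DTree ι → List ι
  | leaf _ => []
  | node i t0 t1 => i :: (t0.nodeVars ++ t1.nodeVars)

/-- The tree has some leaf labelled `b`. -/
def HasLeaf (b : Bool) : DTree ι → Prop
  | leaf c => c = b
  | node _ t0 t1 => HasLeaf b t0 ∨ HasLeaf b t1

/-- From every internal vertex there is a path to a leaf labelled 0 (`false`)
and a path to a leaf labelled 1 (`true`). -/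
def EverySplit : DTree ι → Prop
  | leaf _ => True
  | node _ t0 t1 =>
      (HasLeaf true t0 ∨ HasLeaf true t1) ∧ (HasLeaf false t0 ∨ HasLeaf false t1) ∧
        EverySplit t0 ∧ EverySplit t1

/-- Variable `y` labels some internal vertex at distance `d` (edges) from the root. -/
def OccursAt (y : ι) : ℕ → DTree ι → Prop
  | _, leaf _ => False
  | 0, node i _ _ => i = y
  | d + 1, node _ t0 t1 => OccursAt y d t0 ∨ OccursAt y d t1

end DTree

/-- `DTdepth f` is the minimum depth of a decision tree computing `f`. -/
noncomputable def DTdepth {ι : Type} (f : (ι → Bool) → Bool) : ℕ :=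
  sInf {d | ∃ T : DTree ι, T.ReadOnce ∧ T.Computes f ∧ T.depth ≤ d}

/-! ## Restrictions -/

/-- The function obtained by fixing each variable `i` with `ρ i = some b` to `b`
(variables with `ρ i = none`, i.e. assigned `*`, are left free). -/
def restrictFun {ι : Type} (f : (ι → Bool) → Bool) (ρ : ι → Option Bool) :
    (ι → Bool) → Bool :=
  fun x => f (fun i => (ρ i).getD (x i))

open Classical in
/-- The probability of the event `E` under a random `p`-restriction: each variable
independently gets `*` (i.e. `none`) with probability `p`, and each of the values
`0`, `1` with probability `(1-p)/2`. -/
noncomputable def restrProb {ι : Type} [Fintype ι] [DecidableEq ι] (p : ℝ)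
    (E : (ι → Option Bool) → Prop) : ℝ :=
  ∑ ρ : ι → Option Bool,
    (if E ρ then ∏ i : ι, (if ρ i = none then p else (1 - p) / 2) else 0)

/-! ## Tree tribes -/

/-- The variable index type of the complete `t`-clipped tree `W_t(r)` on `r` levels:
the first block `v_1, …, v_t`, plus, for each `k < t`, a fresh copy of the variables
of `W_t(r-1)` hanging off the 1-edge of `v_{k+1}`. -/
def XiVars (t : ℕ) : ℕ → Type
  | 0 => Empty
  | r + 1 => Fin t ⊕ (Fin t × XiVars t r)

instance XiVars.instFintype (t : ℕ) : ∀ r, Fintype (XiVars t r)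
  | 0 => inferInstanceAs (Fintype Empty)
  | r + 1 =>
      letI := XiVars.instFintype t r
      inferInstanceAs (Fintype (Fin t ⊕ (Fin t × XiVars t r)))

instance XiVars.instDecidableEq (t : ℕ) : ∀ r, DecidableEq (XiVars t r)
  | 0 => inferInstanceAs (DecidableEq Empty)
  | r + 1 =>
      letI := XiVars.instDecidableEq t r
      inferInstanceAs (DecidableEq (Fin t ⊕ (Fin t × XiVars t r)))

/-- The `t`-clipped xor tree tribe `Ξ_t(r)`: the function computed by `W_t(r)` with
each leaf labelled by the parity of the edge labels on its root-to-leaf path.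
Following the 0-edges `v_1 → v_2 → ⋯` until the first variable with value 1 (if any),
whose 1-edge leads to a fresh copy computing the negation of `Ξ_t(r-1)`. -/
def Xi (t : ℕ) : ∀ r, (XiVars t r → Bool) → Bool
  | 0, _ => false
  | r + 1, x =>
      match (List.finRange t).find? (fun i => x (Sum.inl i)) with
      | none => false
      | some k => ! Xi t r (fun v => x (Sum.inr (k, v)))

namespace XiVars

/-- The list of 1-branch positions (0-indexed within each block) taken on the path
from the root to the block containing the given variable. -/
def branches {t : ℕ} : ∀ {r : ℕ}, XiVars t r → List (Fin t)
  | 0, v => nomatch v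
  | _ + 1, Sum.inl _ => []
  | _ + 1, Sum.inr (k, w) => k :: branches w

/-- The (0-indexed) position of the variable within its block. -/
def pos {t : ℕ} : ∀ {r : ℕ}, XiVars t r → Fin t
  | 0, v => nomatch v
  | _ + 1, Sum.inl i => i
  | _ + 1, Sum.inr (_, w) => pos w

/-- The level of a variable: the recursive step at which it was added (level 1 is the
outermost block). -/
def level {t r : ℕ} (v : XiVars t r) : ℕ := (branches v).length + 1

/-- The distance (number of edges) from the root of `W_t(r)` to the vertex of `v`. -/
def rootDist {t r : ℕ} (v : XiVars t r) : ℕ :=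
  ((branches v).map (fun b => (b : ℕ) + 1)).sum + (pos v : ℕ)

/-- The distance from the vertex of `v` to the closest leaf of `W_t(r)`. -/
def leafDist {t r : ℕ} (v : XiVars t r) : ℕ :=
  min (t - (pos v : ℕ)) (1 + min t (r - level v))

/-- A root-to-leaf path of `W_t(r)` is determined by the list `L` of 1-branch positions
it takes (with `L.length ≤ r`); `v.onPath L` says the vertex of `v` lies on that path. -/
def onPath {t r : ℕ} (v : XiVars t r) (L : List (Fin t)) : Prop :=
  branches v = L ∨
    (branches v <+: L ∧ branches v ≠ L ∧
      ∃ b : Fin t, L[(branches v).length]? = some b ∧ pos v ≤ b)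

end XiVars

/-- For `t = 1`, `Ξ_1(n)` is computed by a path on `n` variables: vertex `x_i` has a
0-edge to a leaf and a 1-edge to `x_{i+1}`, leaves labelled by the parity of the edge
labels from the root. -/
def Xi1 : ∀ n, (Fin n → Bool) → Bool
  | 0, _ => false
  | n + 1, x => if x 0 then ! Xi1 n (fun i => x i.succ) else false

/-! ## Fourier coefficients -/

/-- The Fourier coefficient `f̂_S` of a boolean function, viewed as a function
`{−1,1}^n → {−1,1}` via the identification `false ↔ +1`, `true ↔ −1`:
`f̂_S = E_x[f(x) ∏_{i ∈ S} x_i]` over a uniformly random input. -/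
noncomputable def fourierCoeffB {ι : Type} [Fintype ι] [DecidableEq ι]
    (f : (ι → Bool) → Bool) (S : Finset ι) : ℝ :=
  (∑ x : ι → Bool,
      (if f x then (-1 : ℝ) else 1) * ∏ i ∈ S, (if x i then (-1 : ℝ) else 1)) /
    2 ^ Fintype.card ι

/-- The `i`-th Jacobsthal number `J_i = (2^i − (−1)^i)/3`, as a real number. -/
noncomputable def jacobsthal (i : ℕ) : ℝ := (2 ^ i - (-1) ^ i) / 3

/-- The parity (mod-2 sum) of all the bits of `x`. -/
def parityBool {ι : Type} [Fintype ι] [DecidableEq ι] (x : ι → Bool) : Bool :=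
  decide ((Finset.univ.filter fun i => x i = true).card % 2 = 1)

/-! ## The probabilities `P_0(r)`, `P_1(r)` and `γ_d(r)` -/

/-- `P_0(r)`: the probability that `Ξ_t(r)` restricted by a random `p`-restriction is
the identically-`0` function. -/
noncomputable def Pzero (t : ℕ) (p : ℝ) (r : ℕ) : ℝ :=
  restrProb p (fun ρ : XiVars t r → Option Bool => ∀ x, restrictFun (Xi t r) ρ x = false)

/-- `P_1(r)`: the probability that `Ξ_t(r)` restricted by a random `p`-restriction is
the identically-`1` function. -/
noncomputable def Pone (t : ℕ) (p : ℝ) (r : ℕ) : ℝ :=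
  restrProb p (fun ρ : XiVars t r → Option Bool => ∀ x, restrictFun (Xi t r) ρ x = true)

/-- `γ_d(r) = Pr_ρ[DT_depth(Ξ_t(r)|_ρ) ≥ d]` for a random `p`-restriction `ρ`. -/
noncomputable def gammaDT (t : ℕ) (p : ℝ) (d r : ℕ) : ℝ :=
  restrProb p (fun ρ : XiVars t r → Option Bool => d ≤ DTdepth (restrictFun (Xi t r) ρ))

/-! ## The polynomial sequences `P_0(r), P_1(r) ∈ ℝ[p]` -/

/-- The polynomial `q = (1 − p)/2 ∈ ℝ[p]`. -/
noncomputable def qP : Polynomial ℝ := Polynomial.C (1 / 2) * (1 - Polynomial.X)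

/-- The pair of polynomials `(P_0(r), P_1(r)) ∈ ℝ[p] × ℝ[p]`, defined by
`P_0(1) = q^t`, `P_1(1) = 1 − (1−q)^t`, and for `r ≥ 2`, with `U = P_1(r−1)` and
`V = P_0(r−1)`: `P_0(r) = q·U·∑_{k=0}^{t−1}(q+pU)^k + (q+pU)^t` and
`P_1(r) = q·V·∑_{k=0}^{t−1}(q+pV)^k`.  (The value at `r = 0` is junk.) -/
noncomputable def PP (t : ℕ) : ℕ → Polynomial ℝ × Polynomial ℝ
  | 0 => (1, 0)
  | 1 => (qP ^ t, 1 - (1 - qP) ^ t)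
  | r + 2 =>
      (qP * (PP t (r + 1)).2 *
          (∑ k ∈ Finset.range t, (qP + Polynomial.X * (PP t (r + 1)).2) ^ k) +
        (qP + Polynomial.X * (PP t (r + 1)).2) ^ t,
       qP * (PP t (r + 1)).1 *
          (∑ k ∈ Finset.range t, (qP + Polynomial.X * (PP t (r + 1)).1) ^ k))

/-- The polynomial `P_0(r) ∈ ℝ[p]`. -/
noncomputable def P0poly (t r : ℕ) : Polynomial ℝ := (PP t r).1

/-- The polynomial `P_1(r) ∈ ℝ[p]`. -/
noncomputable def P1poly (t r : ℕ) : Polynomial ℝ := (PP t r).2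

/-!
Write `w ≈ A + B p` for the value at `p` of `W = P_i(r)`. With `q = (1 - p)/2` and
`g = q + p w = 1/2 + p (w - 1/2)` (`mix p w` below), the next polynomials take the values
`q w ∑_{k<t} g^k` and `q w ∑_{k<t} g^k + g^t`. Since `|g - 1/2| ≤ p/2`, the second-order
Taylor bound for `x ↦ x^k` at `1/2` turns the first-order approximation of `w` into ones of
`g^k`, of their sum and of the products, with explicit quadratic errors. The error `K p²` of
`w` comes back multiplied by `(1/2) ∑_{k<t} 2^{-k} = 1 - 2^{-t}`; for `K = 30·4^t` this frees
`30·2^t p²` for all the other contributions, each of which is `O(2^t) p²`. Hence the invariant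
"`0 ≤ Q ≤ 1` and `|Q(p) - A - B p| ≤ 30·4^t p²` on `[0, 2^{-t}/420]`, with `|B| ≤ 5/2·2^t`"
survives one step of the recursion. `P(1)` is one step from the constants `(1, 0)`, so the
invariant holds for every `r`. Finally, a polynomial that is `K p²`-close to a line on
`[0, ε]` has its tail `∑_{j≥2} c_j p^{j-2}` bounded by `K` there.
-/

open Finset Polynomial

theorem sum_range_choose_mul_pow_sub_le {r : ℝ} (hr0 : 0 ≤ r) (hr1 : r < 1) (m n : ℕ) :
    ∑ k ∈ range n, (k.choose m : ℝ) * r ^ (k - m) ≤ 1 / (1 - r) ^ (m + 1) := by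
  have hnorm : ‖r‖ < 1 := by rwa [Real.norm_eq_abs, abs_of_nonneg hr0]
  calc ∑ k ∈ range n, (k.choose m : ℝ) * r ^ (k - m)
      ≤ ∑ k ∈ range (m + n), (k.choose m : ℝ) * r ^ (k - m) :=
        sum_le_sum_of_subset_of_nonneg (range_mono (Nat.le_add_left n m))
          (fun _ _ _ => by positivity)
    _ = ∑ j ∈ range n, ((j + m).choose m : ℝ) * r ^ j := by
        rw [sum_range_add, sum_eq_zero (fun k hk => by
          rw [Nat.choose_eq_zero_of_lt (mem_range.mp hk), Nat.cast_zero, zero_mul]), zero_add]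
        refine sum_congr rfl fun j _ => ?_
        rw [add_comm m j, Nat.add_sub_cancel]
    _ ≤ 1 / (1 - r) ^ (m + 1) :=
        sum_le_hasSum _ (fun _ _ => by positivity)
          (hasSum_choose_mul_geometric_of_norm_lt_one m hnorm)

theorem choose_mul_pow_sub_le {r : ℝ} (hr0 : 0 ≤ r) (hr1 : r < 1) (m k : ℕ) :
    (k.choose m : ℝ) * r ^ (k - m) ≤ 1 / (1 - r) ^ (m + 1) :=
  (single_le_sum (f := fun k => (k.choose m : ℝ) * r ^ (k - m)) (fun _ _ => by positivity)
    (self_mem_range_succ k)).trans (sum_range_choose_mul_pow_sub_le hr0 hr1 m (k + 1))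

theorem natCast_mul_half_pow_pred_le_one (t : ℕ) : (t : ℝ) * (1 / 2) ^ (t - 1) ≤ 1 := by
  rcases t with _ | t
  · simp
  have h : (t + 1 : ℝ) ≤ 2 ^ t := by exact_mod_cast Nat.lt_two_pow_self
  rw [Nat.add_sub_cancel, one_div_pow, ← div_eq_mul_one_div, div_le_one (by positivity)]
  exact_mod_cast h

theorem sum_range_half_pow (t : ℕ) :
    ∑ k ∈ range t, (1 / 2 : ℝ) ^ k = 2 - 2 * (1 / 2) ^ t := by
  rw [geom_sum_eq (by norm_num)]; ring

theorem sum_range_mul_half_pow_pred_le (t : ℕ) :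
    ∑ k ∈ range t, (k : ℝ) * (1 / 2) ^ (k - 1) ≤ 4 :=
  calc ∑ k ∈ range t, (k : ℝ) * (1 / 2) ^ (k - 1)
      = ∑ k ∈ range t, (k.choose 1 : ℝ) * (1 / 2) ^ (k - 1) := by simp
    _ ≤ 1 / (1 - 1 / 2) ^ (1 + 1) :=
        sum_range_choose_mul_pow_sub_le (by norm_num) (by norm_num) 1 t
    _ = 4 := by norm_num

theorem abs_pow_sub_pow_sub_mul_le {x y M : ℝ} (hx : |x| ≤ M) (hy : |y| ≤ M) (k : ℕ) :
    |x ^ k - y ^ k - k * y ^ (k - 1) * (x - y)| ≤ k.choose 2 * M ^ (k - 2) * (x - y) ^ 2 := by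
  have hM : 0 ≤ M := (abs_nonneg x).trans hx
  induction k with
  | zero => simp
  | succ k ih =>
    rcases k with _ | k
    · simp
    have hrec : x ^ (k + 2) - y ^ (k + 2) - ((k + 2 : ℕ) : ℝ) * y ^ (k + 2 - 1) * (x - y) =
        x * (x ^ (k + 1) - y ^ (k + 1) - ((k + 1 : ℕ) : ℝ) * y ^ (k + 1 - 1) * (x - y)) +
          (k + 1) * y ^ k * (x - y) ^ 2 := by
      simp only [Nat.add_sub_cancel]; push_cast; ring
    have hchoose : ((k + 2).choose 2 : ℝ) = (k + 1).choose 2 + (k + 1) := by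
      rw [Nat.choose_succ_succ', Nat.choose_one_right]; push_cast; ring
    have hpow : M * ((k + 1).choose 2 * M ^ (k + 1 - 2)) = (k + 1).choose 2 * M ^ k := by
      rcases k with _ | k
      · simp
      · rw [show k + 1 + 1 - 2 = k by omega, pow_succ]; ring
    rw [hrec]
    calc _ ≤ |x| * |x ^ (k + 1) - y ^ (k + 1) - ((k + 1 : ℕ) : ℝ) * y ^ (k + 1 - 1) * (x - y)|
            + (k + 1) * |y| ^ k * (x - y) ^ 2 := by
          refine (abs_add_le _ _).trans (le_of_eq ?_)
          rw [abs_mul, abs_mul, abs_mul, abs_pow, abs_of_nonneg (sq_nonneg (x - y)),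
            abs_of_nonneg (by positivity : (0 : ℝ) ≤ k + 1)]
      _ ≤ M * ((k + 1).choose 2 * M ^ (k + 1 - 2) * (x - y) ^ 2)
            + (k + 1) * M ^ k * (x - y) ^ 2 := by gcongr
      _ = ((k + 1 + 1).choose 2 : ℕ) * M ^ (k + 1 + 1 - 2) * (x - y) ^ 2 := by
          rw [show k + 1 + 1 - 2 = k by omega, hchoose, ← mul_assoc M, hpow]; ring

def LinearApprox (p x a b e : ℝ) : Prop := |x - a - b * p| ≤ e * p ^ 2

namespace LinearApprox

variable {p x y a b a' b' e e' M δ : ℝ}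

theorem eq_of_zero (h : LinearApprox 0 x a b e) : x = a := by
  unfold LinearApprox at h
  simp only [mul_zero, sub_zero, ne_eq, OfNat.ofNat_ne_zero, not_false_eq_true, zero_pow] at h
  linarith [abs_nonpos_iff.mp h]

theorem mono (h : LinearApprox p x a b e) (he : e ≤ e') : LinearApprox p x a b e' :=
  h.trans (by gcongr)

theorem add (hx : LinearApprox p x a b e) (hy : LinearApprox p y a' b' e') :
    LinearApprox p (x + y) (a + a') (b + b') (e + e') := by
  unfold LinearApprox at *
  calc |x + y - (a + a') - (b + b') * p| = |(x - a - b * p) + (y - a' - b' * p)| := by ring_nf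
    _ ≤ (e + e') * p ^ 2 := (abs_add_le _ _).trans (by linarith)

theorem sum {ι : Type*} (s : Finset ι) {x a b e : ι → ℝ}
    (h : ∀ i ∈ s, LinearApprox p (x i) (a i) (b i) (e i)) :
    LinearApprox p (∑ i ∈ s, x i) (∑ i ∈ s, a i) (∑ i ∈ s, b i) (∑ i ∈ s, e i) := by
  unfold LinearApprox at *
  calc |∑ i ∈ s, x i - ∑ i ∈ s, a i - (∑ i ∈ s, b i) * p|
      = |∑ i ∈ s, (x i - a i - b i * p)| := by
        rw [sum_mul, ← sum_sub_distrib, ← sum_sub_distrib]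
    _ ≤ ∑ i ∈ s, e i * p ^ 2 := (abs_sum_le_sum_abs _ _).trans (sum_le_sum h)
    _ = (∑ i ∈ s, e i) * p ^ 2 := (sum_mul ..).symm

theorem mul (hp : 0 ≤ p) (hx : LinearApprox p x a b e) (hy : LinearApprox p y a' b' e')
    (hyM : |y| ≤ M) :
    LinearApprox p (x * y) (a * a') (a * b' + a' * b)
      (e * M + (|a| + |b| * p) * e' + |b| * |b'|) := by
  unfold LinearApprox at *
  have he : 0 ≤ e * p ^ 2 := (abs_nonneg _).trans hx
  have hab : |a + b * p| ≤ |a| + |b| * p := by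
    simpa [abs_mul, abs_of_nonneg hp] using abs_add_le a (b * p)
  calc |x * y - a * a' - (a * b' + a' * b) * p|
      = |(x - a - b * p) * y + (a + b * p) * (y - a' - b' * p) + b * b' * p ^ 2| := by ring_nf
    _ ≤ |x - a - b * p| * |y| + |a + b * p| * |y - a' - b' * p| + |b| * |b'| * p ^ 2 := by
        refine (abs_add_three _ _ _).trans_eq ?_
        simp only [abs_mul]
        rw [abs_of_nonneg (sq_nonneg p)]
    _ ≤ e * p ^ 2 * M + (|a| + |b| * p) * (e' * p ^ 2) + |b| * |b'| * p ^ 2 := by gcongr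
    _ = _ := by ring

theorem pow (h : LinearApprox p x y b e) (hxM : |x| ≤ M) (hyM : |y| ≤ M)
    (hδ : |x - y| ≤ δ * p) (k : ℕ) :
    LinearApprox p (x ^ k) (y ^ k) (k * y ^ (k - 1) * b)
      (k.choose 2 * M ^ (k - 2) * δ ^ 2 + k * |y| ^ (k - 1) * e) := by
  unfold LinearApprox at *
  have hM : 0 ≤ M := (abs_nonneg x).trans hxM
  have hsq : (x - y) ^ 2 ≤ δ ^ 2 * p ^ 2 := by
    rw [← mul_pow, ← sq_abs]; exact pow_le_pow_left₀ (abs_nonneg _) hδ 2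
  calc |x ^ k - y ^ k - k * y ^ (k - 1) * b * p|
      = |(x ^ k - y ^ k - k * y ^ (k - 1) * (x - y)) + k * y ^ (k - 1) * (x - y - b * p)| := by
        ring_nf
    _ ≤ k.choose 2 * M ^ (k - 2) * (x - y) ^ 2 + k * |y| ^ (k - 1) * (e * p ^ 2) := by
        refine (abs_add_le _ _).trans (add_le_add (abs_pow_sub_pow_sub_mul_le hxM hyM k) ?_)
        rw [abs_mul, abs_mul, abs_pow, Nat.abs_cast]
        gcongr
    _ ≤ k.choose 2 * M ^ (k - 2) * (δ ^ 2 * p ^ 2) + k * |y| ^ (k - 1) * (e * p ^ 2) := by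
        gcongr
    _ = _ := by ring

theorem geom_sum (h : LinearApprox p x y b e) (he : 0 ≤ e) (hxM : |x| ≤ M)
    (hyM : |y| ≤ M) (hM : M < 1) (hδ : |x - y| ≤ δ * p) (n : ℕ) :
    LinearApprox p (∑ k ∈ range n, x ^ k) (∑ k ∈ range n, y ^ k)
      ((∑ k ∈ range n, k * y ^ (k - 1)) * b) (δ ^ 2 / (1 - M) ^ 3 + e / (1 - M) ^ 2) := by
  have hM0 : 0 ≤ M := (abs_nonneg x).trans hxM
  have hsum := LinearApprox.sum (range n) fun k _ => h.pow hxM hyM hδ k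
  rw [← sum_mul] at hsum
  refine hsum.mono ?_
  have h2 := sum_range_choose_mul_pow_sub_le hM0 hM 2 n
  have h1 : ∑ k ∈ range n, (k : ℝ) * |y| ^ (k - 1) ≤ 1 / (1 - M) ^ 2 := by
    refine le_trans ?_ (sum_range_choose_mul_pow_sub_le hM0 hM 1 n)
    simp only [Nat.choose_one_right]
    gcongr
  rw [sum_add_distrib, ← sum_mul, ← sum_mul]
  exact (add_le_add (mul_le_mul_of_nonneg_right h2 (sq_nonneg δ))
    (mul_le_mul_of_nonneg_right h1 he)).trans_eq (by ring)

end LinearApprox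

theorem Polynomial.eval_eq_coeff_zero_add_coeff_one_add_sq_mul {R : Type*} [CommSemiring R]
    (Q : R[X]) (p : R) :
    Q.eval p = Q.coeff 0 + Q.coeff 1 * p +
      p ^ 2 * ∑ j ∈ Icc 2 Q.natDegree, Q.coeff j * p ^ (j - 2) := by
  have htail : ∑ j ∈ Icc 2 Q.natDegree, Q.coeff j * p ^ (j - 2) =
      ∑ j ∈ Ico 2 (Q.natDegree + 2), Q.coeff j * p ^ (j - 2) := by
    refine sum_subset (fun j hj => ?_) (fun j hj hj' => ?_)
    · simp only [mem_Icc, mem_Ico] at hj ⊢; omega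
    · simp only [mem_Icc, mem_Ico, not_and, not_le] at hj hj'
      rw [coeff_eq_zero_of_natDegree_lt (hj' hj.1), zero_mul]
  rw [htail, eval_eq_sum_range' (Nat.lt_add_of_pos_right two_pos), range_eq_Ico,
    ← sum_Ico_consecutive _ (Nat.zero_le 2) (Nat.le_add_left 2 _), mul_sum]
  congr 1
  · rw [← range_eq_Ico]; simp [sum_range_succ]
  · refine sum_congr rfl fun j hj => ?_
    rw [mul_left_comm, ← pow_add, Nat.add_sub_cancel' (mem_Ico.mp hj).1]

-- Letting `p → 0⁺` identifies `A + B p` with `Q.coeff 0 + Q.coeff 1 * p`.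
theorem abs_tail_le_of_linearApprox {Q : ℝ[X]} {A B K ε : ℝ} (hε : 0 < ε)
    (h : ∀ p ∈ Set.Icc 0 ε, LinearApprox p (Q.eval p) A B K) :
    ∀ p ∈ Set.Icc 0 ε, |∑ j ∈ Icc 2 Q.natDegree, Q.coeff j * p ^ (j - 2)| ≤ K := by
  set T : ℝ → ℝ := fun p => ∑ j ∈ Icc 2 Q.natDegree, Q.coeff j * p ^ (j - 2)
  have hT : Continuous T := by fun_prop
  have hclosure : closure (Set.Ioc 0 ε) = Set.Icc 0 ε := closure_Ioc hε.ne
  have hA : Q.coeff 0 = A := by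
    rw [coeff_zero_eq_eval_zero]; exact (h 0 ⟨le_rfl, hε.le⟩).eq_of_zero
  have hrest : ∀ p ∈ Set.Ioc 0 ε, p * |Q.coeff 1 - B + p * T p| ≤ p * (K * p) := by
    intro p hp
    have hpQ := h p (Set.Ioc_subset_Icc_self hp)
    rw [LinearApprox, eval_eq_coeff_zero_add_coeff_one_add_sq_mul, hA] at hpQ
    change |A + Q.coeff 1 * p + p ^ 2 * T p - A - B * p| ≤ K * p ^ 2 at hpQ
    rw [show A + Q.coeff 1 * p + p ^ 2 * T p - A - B * p = p * (Q.coeff 1 - B + p * T p) by ring,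
      abs_mul, abs_of_pos hp.1] at hpQ
    linarith
  have hB : Q.coeff 1 = B := by
    have h0 := le_on_closure (fun p hp => le_of_mul_le_mul_left (hrest p hp) hp.1)
      (f := fun p => |Q.coeff 1 - B + p * T p|) (g := fun p => K * p)
      (by fun_prop) (by fun_prop) (hclosure ▸ ⟨le_rfl, hε.le⟩ : (0 : ℝ) ∈ closure _)
    simp only [zero_mul, add_zero, mul_zero] at h0
    linarith [abs_nonpos_iff.mp h0]
  have hT_Ioc : ∀ p ∈ Set.Ioc 0 ε, |T p| ≤ K := by
    intro p hp
    have := hrest p hp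
    rw [hB, sub_self, zero_add, abs_mul, abs_of_pos hp.1, mul_comm K] at this
    exact le_of_mul_le_mul_left (le_of_mul_le_mul_left this hp.1) hp.1
  exact fun p hp => le_on_closure hT_Ioc (by fun_prop) (by fun_prop) (hclosure ▸ hp)

noncomputable def mix (p w : ℝ) : ℝ := (1 - p) / 2 + p * w

section Step

variable {t : ℕ} {p w A B : ℝ}

theorem abs_mix_sub_half_le (hp0 : 0 ≤ p) (hw0 : 0 ≤ w) (hw1 : w ≤ 1) :
    |mix p w - 1 / 2| ≤ 1 / 2 * p := by
  unfold mix
  rw [show (1 - p) / 2 + p * w - 1 / 2 = p * (w - 1 / 2) by ring, abs_mul, abs_of_nonneg hp0,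
    mul_comm]
  gcongr
  exact abs_le.mpr ⟨by linarith, by linarith⟩

theorem abs_mix_le (hp0 : 0 ≤ p) (hp : p ≤ 1 / 5) (hw0 : 0 ≤ w) (hw1 : w ≤ 1) :
    |mix p w| ≤ 3 / 5 := by
  have := abs_sub_abs_le_abs_sub (mix p w) (1 / 2)
  rw [abs_of_pos (by norm_num : (0 : ℝ) < 1 / 2)] at this
  linarith [abs_mix_sub_half_le hp0 hw0 hw1]

theorem linearApprox_mix (hp0 : 0 ≤ p) (hps : p * 2 ^ t ≤ 1 / 420) (hB : |B| ≤ 5 / 2 * 2 ^ t)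
    (hw : LinearApprox p w A B (30 * 2 ^ (2 * t))) :
    LinearApprox p (mix p w) (1 / 2) (A - 1 / 2) (18 / 7 * 2 ^ t) := by
  unfold LinearApprox mix at *
  have hK : 30 * (2 : ℝ) ^ (2 * t) * p ≤ 2 ^ t / 14 := by
    rw [pow_mul', sq]; nlinarith [pow_pos (two_pos (α := ℝ)) t]
  calc |(1 - p) / 2 + p * w - 1 / 2 - (A - 1 / 2) * p|
      = |p * (w - A - B * p) + B * p ^ 2| := by ring_nf
    _ ≤ p * (30 * 2 ^ (2 * t) * p ^ 2) + |B| * p ^ 2 := by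
        refine (abs_add_le _ _).trans ?_
        rw [abs_mul, abs_mul, abs_of_nonneg hp0, abs_of_nonneg (sq_nonneg p)]
        gcongr
    _ = (30 * 2 ^ (2 * t) * p + |B|) * p ^ 2 := by ring
    _ ≤ (2 ^ t / 14 + 5 / 2 * 2 ^ t) * p ^ 2 := by gcongr
    _ = 18 / 7 * 2 ^ t * p ^ 2 := by ring

noncomputable def slopeOne (t : ℕ) (A B : ℝ) : ℝ :=
  (1 - (1 / 2) ^ t) * B +
    A * ((∑ k ∈ range t, (k : ℝ) * (1 / 2) ^ (k - 1)) * (A - 1 / 2) / 2 - (1 - (1 / 2) ^ t))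

theorem le_of_mul_two_pow_le {t : ℕ} {p : ℝ} (hp0 : 0 ≤ p) (hps : p * 2 ^ t ≤ 1 / 420) :
    p ≤ 1 / 420 :=
  (le_mul_of_one_le_right hp0 (one_le_pow₀ one_le_two)).trans hps

theorem abs_sum_mix_pow_le (hp0 : 0 ≤ p) (hp : p ≤ 1 / 5) (hw0 : 0 ≤ w) (hw1 : w ≤ 1)
    (n : ℕ) :
    |∑ k ∈ range n, mix p w ^ k| ≤ 5 / 2 := by
  have hgM := abs_mix_le hp0 hp hw0 hw1
  refine (abs_sum_le_sum_abs _ _).trans ?_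
  simp_rw [abs_pow]
  calc ∑ k ∈ range n, |mix p w| ^ k
      ≤ ∑ k ∈ range n, (k.choose 0 : ℝ) * (3 / 5) ^ (k - 0) := by
        simpa using sum_le_sum fun k _ => pow_le_pow_left₀ (abs_nonneg _) hgM k
    _ ≤ 1 / (1 - 3 / 5) ^ (0 + 1) :=
        sum_range_choose_mul_pow_sub_le (by norm_num) (by norm_num) 0 n
    _ = 5 / 2 := by norm_num

theorem linearApprox_sum_mix_pow (hp0 : 0 ≤ p) (hps : p * 2 ^ t ≤ 1 / 420) (hw0 : 0 ≤ w)
    (hw1 : w ≤ 1) (hB : |B| ≤ 5 / 2 * 2 ^ t) (hw : LinearApprox p w A B (30 * 2 ^ (2 * t))) :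
    LinearApprox p (∑ k ∈ range t, mix p w ^ k) (2 - 2 * (1 / 2) ^ t)
      ((∑ k ∈ range t, (k : ℝ) * (1 / 2) ^ (k - 1)) * (A - 1 / 2)) (4 + 17 * 2 ^ t) := by
  have hp := le_of_mul_two_pow_le hp0 hps
  rw [← sum_range_half_pow]
  refine ((linearApprox_mix hp0 hps hB hw).geom_sum (by positivity)
    (abs_mix_le hp0 (by linarith) hw0 hw1) (by rw [abs_of_pos one_half_pos]; norm_num)
    (by norm_num) (abs_mix_sub_half_le hp0 hw0 hw1) t).mono ?_
  have : (0 : ℝ) ≤ 2 ^ t := by positivity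
  norm_num; linarith

theorem linearApprox_stepOne_eval (hp0 : 0 ≤ p) (hps : p * 2 ^ t ≤ 1 / 420)
    (hw0 : 0 ≤ w) (hw1 : w ≤ 1) (hA0 : 0 ≤ A) (hA1 : A ≤ 1) (hB : |B| ≤ 5 / 2 * 2 ^ t)
    (hw : LinearApprox p w A B (30 * 2 ^ (2 * t))) :
    LinearApprox p ((1 - p) / 2 * w * ∑ k ∈ range t, mix p w ^ k)
      ((1 - (1 / 2) ^ t) * A) (slopeOne t A B) (30 * 2 ^ (2 * t) - 5 * 2 ^ t) := by
  have hs : (1 : ℝ) ≤ 2 ^ t := one_le_pow₀ one_le_two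
  have hp := le_of_mul_two_pow_le hp0 hps
  have hσ₁ : 0 ≤ ∑ k ∈ range t, (k : ℝ) * (1 / 2) ^ (k - 1) ∧
      ∑ k ∈ range t, (k : ℝ) * (1 / 2) ^ (k - 1) ≤ 4 :=
    ⟨sum_nonneg fun _ _ => by positivity, sum_range_mul_half_pow_pred_le t⟩
  have hσA : |(∑ k ∈ range t, (k : ℝ) * (1 / 2) ^ (k - 1)) * (A - 1 / 2)| ≤ 2 := by
    have hAh : |A - 1 / 2| ≤ 1 / 2 := abs_le.mpr ⟨by linarith, by linarith⟩
    rw [abs_mul, abs_of_nonneg hσ₁.1]; nlinarith [abs_nonneg (A - 1 / 2)]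
  have hq : LinearApprox p ((1 - p) / 2) (1 / 2) (-1 / 2) 0 := by
    unfold LinearApprox; rw [show (1 - p) / 2 - 1 / 2 - -1 / 2 * p = 0 by ring]; simp
  have hqS := (hq.mul hp0 (linearApprox_sum_mix_pow hp0 hps hw0 hw1 hB hw)
    (abs_sum_mix_pow_le hp0 (by linarith) hw0 hw1 t)).mono (e' := 3 + 9 * 2 ^ t) (by
      rw [abs_of_pos one_half_pos, abs_of_neg (by norm_num : (-1 / 2 : ℝ) < 0)]
      nlinarith)
  convert (hqS.mul hp0 hw (abs_le.mpr ⟨by linarith, hw1⟩)).mono ?_ using 1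
  · ring
  · ring
  · unfold slopeOne; ring
  set s : ℝ := 2 ^ t with hs_def
  set u : ℝ := (1 / 2) ^ t with hu_def
  set b := 1 / 2 * ((∑ k ∈ range t, (k : ℝ) * (1 / 2) ^ (k - 1)) * (A - 1 / 2)) +
    (2 - 2 * u) * (-1 / 2) with hb_def
  have hus : u * s = 1 := by rw [hu_def, hs_def, ← mul_pow]; norm_num
  have hu : 0 ≤ u ∧ u ≤ 1 := ⟨by positivity, by nlinarith⟩
  have hb : |b| ≤ 2 := by
    have := abs_le.mp hσA
    rw [abs_le, hb_def]; constructor <;> linarith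
  -- the contraction: the error of `w` returns multiplied by `1 - 2⁻ᵗ`
  have h1 : |1 / 2 * (2 - 2 * u)| * (30 * s ^ 2) = 30 * s ^ 2 - 30 * s := by
    rw [abs_of_nonneg (by linarith)]; linear_combination (-30 * s) * hus
  have h2 : |b| * p * (30 * s ^ 2) ≤ s / 7 := by
    calc |b| * p * (30 * s ^ 2) = |b| * (p * (30 * s ^ 2)) := by ring
      _ ≤ 2 * (p * (30 * s ^ 2)) := by gcongr
      _ = 60 * s * (p * s) := by ring
      _ ≤ 60 * s * (1 / 420) := by gcongr
      _ = s / 7 := by ring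
  have h3 : |b| * |B| ≤ 5 * s := by
    nlinarith [mul_le_mul hb hB (abs_nonneg B) zero_le_two]
  rw [pow_mul', ← hs_def]
  linarith

theorem linearApprox_mix_pow (ht : 1 ≤ t) (hp0 : 0 ≤ p) (hps : p * 2 ^ t ≤ 1 / 420)
    (hw0 : 0 ≤ w) (hw1 : w ≤ 1) (hB : |B| ≤ 5 / 2 * 2 ^ t)
    (hw : LinearApprox p w A B (30 * 2 ^ (2 * t))) :
    LinearApprox p (mix p w ^ t) ((1 / 2) ^ t) (t * (1 / 2) ^ (t - 1) * (A - 1 / 2))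
      (5 * 2 ^ t) := by
  have hs : (2 : ℝ) ≤ 2 ^ t := by simpa using pow_le_pow_right₀ one_le_two ht
  have hp := le_of_mul_two_pow_le hp0 hps
  have half : |(1 / 2 : ℝ)| = 1 / 2 := abs_of_pos (by norm_num)
  refine ((linearApprox_mix hp0 hps hB hw).pow (abs_mix_le hp0 (by linarith) hw0 hw1)
    (by rw [half]; norm_num) (abs_mix_sub_half_le hp0 hw0 hw1) t).mono ?_
  have hchoose := choose_mul_pow_sub_le (by norm_num : (0 : ℝ) ≤ 3 / 5) (by norm_num) 2 t
  have ht' := natCast_mul_half_pow_pred_le_one t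
  rw [half]
  calc (t.choose 2 : ℝ) * (3 / 5) ^ (t - 2) * (1 / 2) ^ 2 +
        t * (1 / 2) ^ (t - 1) * (18 / 7 * 2 ^ t)
      ≤ 1 / (1 - 3 / 5) ^ (2 + 1) * (1 / 2) ^ 2 + 1 * (18 / 7 * 2 ^ t) := by gcongr
    _ ≤ 5 * 2 ^ t := by norm_num; linarith

theorem linearApprox_stepZero_eval (ht : 1 ≤ t) (hp0 : 0 ≤ p) (hps : p * 2 ^ t ≤ 1 / 420)
    (hw0 : 0 ≤ w) (hw1 : w ≤ 1) (hA0 : 0 ≤ A) (hA1 : A ≤ 1) (hB : |B| ≤ 5 / 2 * 2 ^ t)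
    (hw : LinearApprox p w A B (30 * 2 ^ (2 * t))) :
    LinearApprox p ((1 - p) / 2 * w * ∑ k ∈ range t, mix p w ^ k +
        mix p w ^ t) ((1 - (1 / 2) ^ t) * A + (1 / 2) ^ t)
      (slopeOne t A B + t * (1 / 2) ^ (t - 1) * (A - 1 / 2)) (30 * 2 ^ (2 * t)) :=
  ((linearApprox_stepOne_eval hp0 hps hw0 hw1 hA0 hA1 hB hw).add
    (linearApprox_mix_pow ht hp0 hps hw0 hw1 hB hw)).mono (by linarith)

theorem sum_mix_pow_bounds (hp0 : 0 ≤ p) (hp1 : p ≤ 1) (hw0 : 0 ≤ w) (hw1 : w ≤ 1)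
    (n : ℕ) :
    0 ≤ (1 - p) / 2 * w * ∑ k ∈ range n, mix p w ^ k ∧
      0 ≤ mix p w ^ n ∧
      (1 - p) / 2 * w * ∑ k ∈ range n, mix p w ^ k + mix p w ^ n ≤ 1 := by
  have hpw : p * w ≤ p := mul_le_of_le_one_right hp0 hw1
  have hq : 0 ≤ (1 - p) / 2 := by linarith
  have hg : 0 ≤ mix p w := by unfold mix; positivity
  have hqg : (1 - p) / 2 ≤ 1 - mix p w := by unfold mix; linarith
  refine ⟨by positivity, by positivity, ?_⟩
  calc (1 - p) / 2 * w * ∑ k ∈ range n, mix p w ^ k + mix p w ^ n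
      ≤ (1 - mix p w) * 1 * ∑ k ∈ range n, mix p w ^ k + mix p w ^ n := by
        have := hq.trans hqg
        gcongr
    _ = 1 := by rw [mul_one, mul_neg_geom_sum]; ring

theorem abs_slopeOne_le (hA0 : 0 ≤ A) (hA1 : A ≤ 1) (hB : |B| ≤ 5 / 2 * 2 ^ t) :
    |slopeOne t A B| ≤ 5 / 2 * 2 ^ t - 1 / 2 := by
  have hus : (1 / 2 : ℝ) ^ t * 2 ^ t = 1 := by rw [← mul_pow]; norm_num
  have hu1 : (1 / 2 : ℝ) ^ t ≤ 1 := pow_le_one₀ (by norm_num) (by norm_num)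
  have hσ₁ := sum_range_mul_half_pow_pred_le t
  have hσ₁0 : 0 ≤ ∑ k ∈ range t, (k : ℝ) * (1 / 2) ^ (k - 1) :=
    sum_nonneg fun _ _ => by positivity
  have hAh : |A - 1 / 2| ≤ 1 / 2 := abs_le.mpr ⟨by linarith, by linarith⟩
  have h1 : |(1 - (1 / 2 : ℝ) ^ t) * B| ≤ 5 / 2 * 2 ^ t - 5 / 2 := by
    rw [abs_mul, abs_of_nonneg (sub_nonneg.mpr hu1)]
    nlinarith [abs_nonneg B]
  have h2 : |A * ((∑ k ∈ range t, (k : ℝ) * (1 / 2) ^ (k - 1)) * (A - 1 / 2) / 2 -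
      (1 - (1 / 2) ^ t))| ≤ 2 := by
    rw [abs_mul, abs_of_nonneg hA0]
    refine (mul_le_mul hA1 ?_ (abs_nonneg _) zero_le_one).trans_eq (one_mul _)
    have := abs_le.mp hAh
    rw [abs_le]; constructor <;> nlinarith [pow_nonneg (by norm_num : (0 : ℝ) ≤ 1 / 2) t]
  exact (abs_add_le _ _).trans (by linarith)

theorem abs_slopeOne_add_le (hA0 : 0 ≤ A) (hA1 : A ≤ 1) (hB : |B| ≤ 5 / 2 * 2 ^ t) :
    |slopeOne t A B + t * (1 / 2) ^ (t - 1) * (A - 1 / 2)| ≤ 5 / 2 * 2 ^ t := by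
  have h : |(t : ℝ) * (1 / 2) ^ (t - 1) * (A - 1 / 2)| ≤ 1 / 2 := by
    rw [abs_mul, abs_of_nonneg (by positivity)]
    exact (mul_le_mul (natCast_mul_half_pow_pred_le_one t)
      (abs_le.mpr ⟨by linarith, by linarith⟩) (abs_nonneg _) zero_le_one).trans_eq (one_mul _)
  linarith [abs_add_le (slopeOne t A B) (t * (1 / 2) ^ (t - 1) * (A - 1 / 2)),
    abs_slopeOne_le hA0 hA1 hB]

end Step

noncomputable def stepOne (t : ℕ) (W : ℝ[X]) : ℝ[X] :=
  qP * W * ∑ k ∈ range t, (qP + X * W) ^ k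

noncomputable def stepZero (t : ℕ) (W : ℝ[X]) : ℝ[X] := stepOne t W + (qP + X * W) ^ t

theorem eval_qP (p : ℝ) : qP.eval p = (1 - p) / 2 := by simp [qP]; ring

theorem eval_stepOne (t : ℕ) (W : ℝ[X]) (p : ℝ) :
    (stepOne t W).eval p = (1 - p) / 2 * W.eval p * ∑ k ∈ range t, mix p (W.eval p) ^ k := by
  simp [stepOne, eval_finsetSum, eval_qP, mix]

theorem eval_stepZero (t : ℕ) (W : ℝ[X]) (p : ℝ) :
    (stepZero t W).eval p = (stepOne t W).eval p + mix p (W.eval p) ^ t := by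
  simp [stepZero, eval_qP, mix]

theorem PP_succ (t r : ℕ) : PP t (r + 1) = (stepZero t (PP t r).2, stepOne t (PP t r).1) := by
  rcases r with _ | r
  · have hqP : qP + X = 1 - qP := by
      have h2 : C (1 / 2 : ℝ) * 2 = 1 := by rw [← map_ofNat C 2, ← C_mul]; norm_num
      unfold qP; linear_combination (1 - X) * h2
    simp only [PP, stepZero, stepOne, mul_zero, zero_mul, add_zero, zero_add, mul_one, hqP]
    rw [← mul_neg_geom_sum, sub_sub_cancel]
  · rfl

def NearLinear (t : ℕ) (Q : ℝ[X]) : Prop :=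
  ∃ A B : ℝ, |B| ≤ 5 / 2 * 2 ^ t ∧ ∀ p ∈ Set.Icc (0 : ℝ) ((1 / 2) ^ t / 420),
    0 ≤ Q.eval p ∧ Q.eval p ≤ 1 ∧ LinearApprox p (Q.eval p) A B (30 * 2 ^ (2 * t))

theorem nearLinear_C {t : ℕ} {c : ℝ} (hc0 : 0 ≤ c) (hc1 : c ≤ 1) : NearLinear t (C c) :=
  ⟨c, 0, by rw [abs_zero]; positivity, fun p _ => ⟨by simpa using hc0, by simpa using hc1, by
    simp only [LinearApprox, eval_C, sub_self, zero_mul, abs_zero]; positivity⟩⟩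

namespace NearLinear

variable {t : ℕ} {Q W : ℝ[X]}

theorem step (ht : 1 ≤ t) (hW : NearLinear t W) :
    NearLinear t (stepOne t W) ∧ NearLinear t (stepZero t W) := by
  obtain ⟨A, B, hB, hW⟩ := hW
  have hA : W.eval 0 = A := (hW 0 ⟨le_rfl, by positivity⟩).2.2.eq_of_zero
  obtain ⟨hA0, hA1, -⟩ := hA ▸ hW 0 ⟨le_rfl, by positivity⟩
  have hps : ∀ p ∈ Set.Icc (0 : ℝ) ((1 / 2) ^ t / 420), p * 2 ^ t ≤ 1 / 420 := by
    intro p hp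
    have : (1 / 2 : ℝ) ^ t / 420 * 2 ^ t = 1 / 420 := by
      rw [div_mul_eq_mul_div, ← mul_pow]; norm_num
    exact this ▸ mul_le_mul_of_nonneg_right hp.2 (by positivity)
  have hp1 : ∀ p ∈ Set.Icc (0 : ℝ) ((1 / 2) ^ t / 420), p ≤ 1 := fun p hp =>
    (le_of_mul_two_pow_le hp.1 (hps p hp)).trans (by norm_num)
  refine ⟨⟨(1 - (1 / 2) ^ t) * A, slopeOne t A B, by linarith [abs_slopeOne_le hA0 hA1 hB],
    fun p hp => ?_⟩, ⟨(1 - (1 / 2) ^ t) * A + (1 / 2) ^ t,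
    slopeOne t A B + t * (1 / 2) ^ (t - 1) * (A - 1 / 2), abs_slopeOne_add_le hA0 hA1 hB,
    fun p hp => ?_⟩⟩ <;>
  obtain ⟨hw0, hw1, hw⟩ := hW p hp <;>
  obtain ⟨hlo, hgt0, hhi⟩ := sum_mix_pow_bounds hp.1 (hp1 p hp) hw0 hw1 t <;>
  simp only [eval_stepZero, eval_stepOne]
  · have h2t : (0 : ℝ) ≤ 5 * 2 ^ t := by positivity
    exact ⟨hlo, by linarith,
      (linearApprox_stepOne_eval hp.1 (hps p hp) hw0 hw1 hA0 hA1 hB hw).mono (by linarith)⟩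
  · exact ⟨by linarith, hhi,
      linearApprox_stepZero_eval ht hp.1 (hps p hp) hw0 hw1 hA0 hA1 hB hw⟩

theorem abs_tail_le (hQ : NearLinear t Q) {p : ℝ}
    (hp : p ∈ Set.Icc (0 : ℝ) ((1 / 2) ^ t / 420)) :
    |∑ j ∈ Icc 2 Q.natDegree, Q.coeff j * p ^ (j - 2)| ≤ 30 * 2 ^ (2 * t) := by
  obtain ⟨A, B, -, hQ⟩ := hQ
  exact abs_tail_le_of_linearApprox (by positivity) (fun p hp => (hQ p hp).2.2) p hp

end NearLinear

theorem nearLinear_PP {t : ℕ} (ht : 1 ≤ t) (r : ℕ) :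
    NearLinear t (PP t r).1 ∧ NearLinear t (PP t r).2 := by
  induction r with
  | zero =>
    rw [PP]
    exact ⟨by simpa using nearLinear_C (t := t) zero_le_one le_rfl,
      by simpa using nearLinear_C (t := t) le_rfl zero_le_one⟩
  | succ r ih => rw [PP_succ]; exact ⟨(ih.2.step ht).2, (ih.1.step ht).1⟩

theorem ppoly_tail_bound_general (t : ℕ) (ht : 1 ≤ t) (r : ℕ)
    (p : ℝ) (hp0 : 0 ≤ p) (hp1 : p ≤ (1 / 2 : ℝ) ^ t / 420) :
    |∑ j ∈ Finset.Icc 2 (P0poly t r).natDegree, (P0poly t r).coeff j * p ^ (j - 2)| ≤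
        30 * 2 ^ (2 * t) ∧
      |∑ j ∈ Finset.Icc 2 (P1poly t r).natDegree, (P1poly t r).coeff j * p ^ (j - 2)| ≤
        30 * 2 ^ (2 * t) :=
  ⟨(nearLinear_PP ht r).1.abs_tail_le ⟨hp0, hp1⟩,
    (nearLinear_PP ht r).2.abs_tail_le ⟨hp0, hp1⟩⟩

/-- for every `r ≥ 1`, `i ∈ {0,1}` and `0 ≤ p ≤ 2^{−t}/420`, the tail
of `P_i(r)` beyond the linear term satisfies `|∑_{j≥2}([p^j]P_i(r))·p^{j−2}| ≤ 30·2^{2t}`. -/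
theorem ppoly_tail_bound (t : ℕ) (ht : 1 ≤ t) (r : ℕ) (hr : 1 ≤ r)
    (p : ℝ) (hp0 : 0 ≤ p) (hp1 : p ≤ (1 / 2 : ℝ) ^ t / 420) :
    |∑ j ∈ Finset.Icc 2 (P0poly t r).natDegree, (P0poly t r).coeff j * p ^ (j - 2)| ≤
        30 * 2 ^ (2 * t) ∧
      |∑ j ∈ Finset.Icc 2 (P1poly t r).natDegree, (P1poly t r).coeff j * p ^ (j - 2)| ≤
        30 * 2 ^ (2 * t) :=
  ppoly_tail_bound_general t ht r p hp0 hp1
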